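/- (Characterization of type-1 targets via true gaps, base combinatorial step.) Let S be a finite linearly ordered set of monomials and A the bridge matching produced by the Barile-Macchia algorithm. If (τ, σ) is a reversed edge of A, i.e., (τ, σ) ∈ A with σ = τ \ {sb(τ)}, then sb(τ) is a true gap of σ that does not dominate any bridge of σ. Conversely, if σ has a true gap not dominating any of its bridges and m is the smallest such true gap, then sb(σ ∪ {m}) = m and m does not dominate any true gap of σ ∪ {m}. -/
import Mathlib


namespace BarileMacchia

variable {N : ℕ} {M : Type*}

/-- The lcm (pointwise max of exponent vectors) of a finite set of monomials. -/
def lcmF (mon : M → Fin N → ℕ) (σ : Finset M) : Fin N → ℕ :=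
  fun i => σ.sup fun m => mon m i

/-- `m` is a bridge of `σ`: `m ∈ σ` and removing it does not change the lcm. -/
def IsBridge [DecidableEq M] (mon : M → Fin N → ℕ) (σ : Finset M) (m : M) : Prop :=
  m ∈ σ ∧ lcmF mon (σ.erase m) = lcmF mon σ

/-- `m` is a gap of `σ`: `m ∉ σ` and adding it does not change the lcm. -/
def IsGap [DecidableEq M] (mon : M → Fin N → ℕ) (σ : Finset M) (m : M) : Prop :=
  m ∉ σ ∧ lcmF mon (insert m σ) = lcmF mon σ

/-- A gap `m` of `σ` is a true gap if every bridge of `σ ∪ {m}` dominated by `m`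
is already a bridge of `σ`. -/
def IsTrueGap [LinearOrder M] (mon : M → Fin N → ℕ) (σ : Finset M) (m : M) : Prop :=
  IsGap mon σ m ∧ ∀ m', IsBridge mon (insert m σ) m' → m > m' → IsBridge mon σ m'

/-- `m` is the smallest bridge of `σ` (with respect to the linear order on `M`). -/
def IsSmallestBridge [LinearOrder M] (mon : M → Fin N → ℕ) (σ : Finset M) (m : M) : Prop :=
  IsBridge mon σ m ∧ ∀ m', IsBridge mon σ m' → m ≤ m'

/-- The bridge matching produced by Algorithm 2.4: each subset `σ` having a bridge is matched
with `σ \ {sb(σ)}`, and among distinct sources with the same target only the one with the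
strictly smallest smallest-bridge is kept. -/
def BMmatching [LinearOrder M] (mon : M → Fin N → ℕ) : Set (Finset M × Finset M) :=
  {e | ∃ s, IsSmallestBridge mon e.1 s ∧ e.2 = e.1.erase s ∧
    ∀ σ' s', IsSmallestBridge mon σ' s' → σ'.erase s' = e.2 → σ' ≠ e.1 → s < s'}

lemma lcmF_mono [DecidableEq M] (mon : M → Fin N → ℕ) {σ τ : Finset M} (h : σ ⊆ τ) :
    ∀ i, lcmF mon σ i ≤ lcmF mon τ i := fun i => Finset.sup_mono h

/-- A bridge of a subset with the same lcm is a bridge of the superset. -/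
lemma bridge_of_superset [DecidableEq M] (mon : M → Fin N → ℕ) {σ ρ : Finset M} {b : M}
    (hsub : σ ⊆ ρ) (hlcm : lcmF mon ρ = lcmF mon σ) (hb : IsBridge mon σ b) :
    IsBridge mon ρ b := by
  refine ⟨hsub hb.1, funext fun i => le_antisymm (lcmF_mono mon (Finset.erase_subset _ _) i) ?_⟩
  calc lcmF mon ρ i = lcmF mon (σ.erase b) i := by rw [hlcm, hb.2]
    _ ≤ lcmF mon (ρ.erase b) i := lcmF_mono mon (Finset.erase_subset_erase _ hsub) i

/-- Theorem 2.17(a) (both directions): if `(τ, σ)` is an edge of the bridge matching, so that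
`σ = τ \ {sb τ}`, then `sb τ` is a true gap of `σ` not dominating any bridge of `σ`.
Conversely, if `m` is the smallest true gap of `σ` among those not dominating any bridge of
`σ`, then `sb(σ ∪ {m}) = m` and `m` does not dominate any true gap of `σ ∪ {m}`. -/
theorem statement19 [LinearOrder M] (mon : M → Fin N → ℕ) :
    (∀ τ σ : Finset M, (τ, σ) ∈ BMmatching mon → ∀ s, IsSmallestBridge mon τ s →
      σ = τ.erase s ∧ IsTrueGap mon σ s ∧ ∀ m', IsBridge mon σ m' → ¬ s > m') ∧
    (∀ (σ : Finset M) (m : M),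
      (IsTrueGap mon σ m ∧ ∀ m', IsBridge mon σ m' → ¬ m > m') →
      (∀ m', (IsTrueGap mon σ m' ∧ ∀ m'', IsBridge mon σ m'' → ¬ m' > m'') → m ≤ m') →
      IsSmallestBridge mon (insert m σ) m ∧
        ∀ m', IsTrueGap mon (insert m σ) m' → ¬ m > m') := by
  constructor
  · rintro τ σ ⟨s₀, hs₀, hσ, -⟩ s hs
    obtain rfl : s = s₀ := le_antisymm (hs.2 _ hs₀.1) (hs₀.2 _ hs.1)
    dsimp only at hσ
    subst hσ
    have hins : insert s (τ.erase s) = τ := Finset.insert_erase hs.1.1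
    have hlcmτ : lcmF mon τ = lcmF mon (τ.erase s) := hs.1.2.symm
    refine ⟨rfl, ⟨⟨Finset.notMem_erase _ _, by rw [hins, hlcmτ]⟩, ?_⟩, ?_⟩
    · intro m' hb hlt
      rw [hins] at hb
      exact absurd (hs.2 _ hb) (not_le.mpr hlt)
    · intro m' hb hlt
      have : IsBridge mon τ m' :=
        bridge_of_superset mon (Finset.erase_subset _ _) hlcmτ hb
      exact absurd (hs.2 _ this) (not_le.mpr hlt)
  · rintro σ m ⟨⟨⟨hmσ, hlcm⟩, htg⟩, hnd⟩ hmin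
    have hmb : IsBridge mon (insert m σ) m :=
      ⟨Finset.mem_insert_self _ _, by rw [Finset.erase_insert hmσ, hlcm]⟩
    refine ⟨⟨hmb, fun m' hb => ?_⟩, ?_⟩
    · by_contra h
      push_neg at h
      exact hnd m' (htg m' hb h) h
    · rintro m' ⟨⟨hm'τ, hlcm'⟩, htg'⟩ hlt
      have hm'σ : m' ∉ σ := fun h => hm'τ (Finset.mem_insert_of_mem h)
      have hne : m' ≠ m := fun h => absurd h.ge (not_le.mpr hlt)
      -- lcm of insert m' (insert m σ) equals lcm σ
      have h1 : lcmF mon (insert m' (insert m σ)) = lcmF mon σ := by rw [hlcm', hlcm]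
      -- m' is a gap of σ
      have hgap : IsGap mon σ m' := by
        refine ⟨hm'σ, funext fun i => le_antisymm ?_ (lcmF_mono mon (Finset.subset_insert _ _) i)⟩
        calc lcmF mon (insert m' σ) i
            ≤ lcmF mon (insert m' (insert m σ)) i :=
              lcmF_mono mon (Finset.insert_subset_insert _ (Finset.subset_insert _ _)) i
          _ = lcmF mon σ i := by rw [h1]
      -- m' is a true gap of σ not dominating any bridge of σ, contradicting minimality
      have : m ≤ m' := by
        refine hmin m' ⟨⟨hgap, fun b hb hblt => ?_⟩, fun b hb hblt => ?_⟩
        · -- b bridge of insert m' σ, b < m' ⇒ b bridge of σ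
          have hb1 : IsBridge mon (insert m' (insert m σ)) b :=
            bridge_of_superset mon
              (Finset.insert_subset_insert _ (Finset.subset_insert _ _))
              (h1.trans hgap.2.symm) hb
          have hb2 : IsBridge mon (insert m σ) b := htg' b hb1 hblt
          exact htg b hb2 (lt_trans hblt hlt)
        · exact hnd b hb (lt_trans hblt hlt)
      exact absurd this (not_le.mpr hlt)

end BarileMacchia
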